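/- arXiv:2103.03308 — 4 statements merged into one kernel-verified Lean document; each statement's English description precedes it below -/
import Mathlib

section
/- The set Per⁺(f) of periodic points of the doubling map f is dense in [0,1], where Per⁺(f) consists of all periodic points x of f with some period n ≥ 1 such that the number of indices 0 ≤ i < n with fⁱ(x) > 1/2 is strictly greater than the number of indices 0 ≤ i < n with fⁱ(x) ≤ 1/2. -/
open MeasureTheory Filter Set

noncomputable section

open scoped Classical

/-- The doubling map on `[0,1]`. -/
def dbl (x : ℝ) : ℝ := if x ≤ 1/2 then 2*x else 2*x - 1

/-- The set `Per⁺(f)` of periodic points of the doubling map for which, over one period,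
strictly more iterates lie in `(1/2, 1]` than in `[0, 1/2]`. -/
def PerPlus : Set ℝ :=
  {x | x ∈ Set.Icc (0:ℝ) 1 ∧ ∃ n : ℕ, 1 ≤ n ∧ dbl^[n] x = x ∧
    ((Finset.range n).filter (fun i => 1/2 < dbl^[i] x)).card >
    ((Finset.range n).filter (fun i => dbl^[i] x ≤ 1/2)).card}

lemma dbl_iter_one : ∀ i : ℕ, dbl^[i] (1:ℝ) = 1 := by
  intro i; induction i with
  | zero => simp
  | succ i ih => rw [Function.iterate_succ_apply', ih]; norm_num [dbl]

lemma dbl_frac (D t : ℕ) (hD : D % 2 = 1) (ht : t < D) :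
    dbl ((t:ℝ)/(D:ℝ)) = ((2*t % D : ℕ):ℝ)/(D:ℝ) := by
  have hD0 : 0 < D := by omega
  have hDR : (0:ℝ) < (D:ℝ) := by exact_mod_cast hD0
  by_cases h : 2*t < D
  · have h1 : (t:ℝ)/(D:ℝ) ≤ 1/2 := by
      rw [div_le_div_iff₀ hDR (by norm_num : (0:ℝ) < 2)]
      have h' : (2*(t:ℝ)) ≤ (D:ℝ) := by exact_mod_cast le_of_lt h
      linarith
    rw [dbl, if_pos h1, Nat.mod_eq_of_lt h]
    push_cast; ring
  · have h2 : D < 2*t := by omega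
    have h1 : ¬ ((t:ℝ)/(D:ℝ) ≤ 1/2) := by
      rw [div_le_div_iff₀ hDR (by norm_num : (0:ℝ) < 2)]
      push_neg
      have h' : (D:ℝ) < 2*(t:ℝ) := by exact_mod_cast h2
      linarith
    have hm : 2*t % D = 2*t - D := by
      rw [Nat.mod_eq_sub_mod (le_of_lt h2), Nat.mod_eq_of_lt (by omega)]
    rw [dbl, if_neg h1, hm]
    have hle : D ≤ 2*t := le_of_lt h2
    push_cast [Nat.cast_sub hle]
    field_simp

lemma orbit (n b : ℕ) (hn : 1 ≤ n) (hb : b < 2^n - 1) (i : ℕ) :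
    dbl^[i] ((b:ℝ)/((2^n - 1 : ℕ):ℝ)) = ((2^i * b % (2^n - 1) : ℕ) : ℝ)/((2^n - 1 : ℕ):ℝ) := by
  have h2n : 2 ≤ 2^n := by
    calc 2 = 2^1 := (pow_one 2).symm
    _ ≤ 2^n := Nat.pow_le_pow_right (by norm_num) hn
  have hmod2 : 2^n % 2 = 0 := by
    obtain ⟨m, rfl⟩ : ∃ m, n = m + 1 := ⟨n - 1, by omega⟩
    simp [pow_succ, Nat.mul_mod]
  have hD : (2^n - 1) % 2 = 1 := by omega
  have hD0 : 0 < 2^n - 1 := by omega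
  induction i with
  | zero => simp [Nat.mod_eq_of_lt hb]
  | succ i ih =>
    rw [Function.iterate_succ_apply', ih,
      dbl_frac (2^n - 1) _ hD (Nat.mod_lt _ hD0)]
    congr 2
    have h1 : 2 * (2^i * b % (2^n - 1)) % (2^n - 1) = 2 * (2^i * b) % (2^n - 1) :=
      (Nat.ModEq.mul_left 2 (Nat.mod_modEq _ _))
    rw [h1]; ring_nf

lemma value (k j a : ℕ) (hj : j < k+1) (ha : a + 1 < 2^k) :
    2^(k+j) * ((a+1)*2^(k+1) - 1) % (2^(2*k+1) - 1)
      = (2^(2*k+1) - 1) - 2^j * (2^k - (a+1)) := by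
  have hjk : 2^j ≤ 2^k := Nat.pow_le_pow_right (by norm_num) (by omega)
  have hc : 2^k - (a+1) ≥ 1 := by omega
  have hck : 2^k - (a+1) ≤ 2^k := by omega
  have htD : 2^j * (2^k - (a+1)) ≤ 2^k * 2^k := Nat.mul_le_mul hjk hck
  have hkk : 2^k * 2^k ≤ 2^(2*k+1) - 1 := by
    have h1 : 2^k * 2^k * 2 = 2^(2*k+1) := by rw [two_mul, pow_add, pow_add, pow_one]
    have h2 : 1 ≤ 2^k * 2^k := Nat.one_le_iff_ne_zero.mpr (by positivity)
    omega
  have htD' : 2^j * (2^k - (a+1)) ≤ 2^(2*k+1) - 1 := le_trans htD hkk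
  have hone : 1 ≤ 2^j * (2^k - (a+1)) := Nat.one_le_iff_ne_zero.mpr (by positivity)
  have hb1 : 1 ≤ (a+1)*2^(k+1) := Nat.one_le_iff_ne_zero.mpr (by positivity)
  have ht1 : 1 ≤ (a+1)*2^j := Nat.one_le_iff_ne_zero.mpr (by positivity)
  have h2n1 : 1 ≤ 2^(2*k+1) := Nat.one_le_two_pow
  have key : 2^(k+j) * ((a+1)*2^(k+1) - 1)
      = ((2^(2*k+1) - 1) - 2^j * (2^k - (a+1))) + (2^(2*k+1) - 1) * ((a+1)*2^j - 1) := by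
    zify [hb1, ht1, h2n1, htD', hone, Nat.le_of_lt ha, hck]
    ring
  rw [key, Nat.add_mul_mod_self_left, Nat.mod_eq_of_lt (by omega)]

lemma one_mem_perPlus : (1:ℝ) ∈ PerPlus := by
  refine ⟨by norm_num, 1, le_refl 1, by simpa using dbl_iter_one 1, ?_⟩
  simp only [Finset.range_one, Finset.filter_singleton, dbl_iter_one 0]
  norm_num

theorem stmt2 : Set.Icc (0:ℝ) 1 ⊆ closure PerPlus := by
  intro y hy
  rw [Metric.mem_closure_iff]
  intro ε hε
  obtain ⟨k, hk⟩ : ∃ k : ℕ, (1/2:ℝ)^k < ε/2 :=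
    exists_pow_lt_of_lt_one (by positivity) (by norm_num)
  have h2kR : (0:ℝ) < 2^k := by positivity
  have hkinv : (1:ℝ)/2^k < ε/2 := by rwa [div_pow, one_pow] at hk
  have h2k1 : 1 ≤ 2^k := Nat.one_le_two_pow
  have h2kc : ((2:ℝ))^k = ((2^k : ℕ):ℝ) := by push_cast; ring
  set a : ℕ := min (Nat.floor (y * 2^k)) (2^k - 1) with ha_def
  have hy0 : 0 ≤ y := hy.1
  have hy1 : y ≤ 1 := hy.2
  have hfl : (a:ℝ) ≤ y * 2^k := by
    have h1 : (Nat.floor (y*2^k) : ℝ) ≤ y*2^k := Nat.floor_le (by positivity)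
    have h2 : (a:ℕ) ≤ Nat.floor (y*2^k) := min_le_left _ _
    calc (a:ℝ) ≤ (Nat.floor (y*2^k) : ℝ) := by exact_mod_cast h2
      _ ≤ y*2^k := h1
  have hax : (a:ℝ)/2^k ≤ y := by rw [div_le_iff₀ h2kR]; exact hfl
  by_cases hcase : a + 1 < 2^k
  · -- main case
    have hafl : a = Nat.floor (y*2^k) := by
      rcases le_or_gt (Nat.floor (y*2^k)) (2^k - 1) with h | h
      · simp [ha_def, min_eq_left h]
      · exfalso
        have : a = 2^k - 1 := by simp [ha_def, min_eq_right (le_of_lt h)]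
        omega
    have hylt : y * 2^k < a + 1 := by
      rw [hafl]; push_cast; exact Nat.lt_floor_add_one _
    have hyup : y ≤ ((a:ℝ)+1)/2^k := by rw [le_div_iff₀ h2kR]; linarith
    set n : ℕ := 2*k+1 with hn_def
    set b : ℕ := (a+1)*2^(k+1) - 1 with hb_def
    set D : ℕ := 2^n - 1 with hD_def
    have hn1 : 1 ≤ n := by omega
    have hpow_n : 2^n = 2^k * 2^(k+1) := by rw [hn_def]; ring
    have h2k1' : 2 ≤ 2^(k+1) := by
      calc 2 = 2^1 := rfl
      _ ≤ 2^(k+1) := Nat.pow_le_pow_right (by norm_num) (by omega)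
    have hb1 : 1 ≤ (a+1)*2^(k+1) := Nat.one_le_iff_ne_zero.mpr (by positivity)
    have hbD : b < D := by
      have h1 : (a+1)*2^(k+1) ≤ (2^k - 1) * 2^(k+1) :=
        Nat.mul_le_mul_right _ (by omega)
      have h2 : (2^k - 1) * 2^(k+1) + 2^(k+1) = 2^k * 2^(k+1) := by
        rw [← Nat.succ_mul, Nat.succ_eq_add_one, Nat.sub_add_cancel h2k1]
      omega
    have hD0 : 0 < D := by omega
    have hDR : (0:ℝ) < (D:ℝ) := by exact_mod_cast hD0
    set x : ℝ := (b:ℝ)/(D:ℝ) with hx_def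
    have h2n1 : 1 ≤ 2^n := Nat.one_le_two_pow
    have hbR : (b:ℝ) = ((a:ℝ)+1)*2^(k+1) - 1 := by rw [hb_def]; push_cast [hb1]; ring
    have hDRval : (D:ℝ) = 2^n - 1 := by rw [hD_def]; push_cast [h2n1]; ring
    -- digit property
    have hdigit : ∀ i, k ≤ i → i < n → 1/2 < dbl^[i] x := by
      intro i hki hin
      obtain ⟨j, rfl⟩ : ∃ j, i = k + j := ⟨i - k, by omega⟩
      have hj : j < k + 1 := by omega
      rw [hx_def, orbit n b hn1 hbD, hb_def, hn_def, value k j a hj hcase]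
      have hjk : 2^j ≤ 2^k := Nat.pow_le_pow_right (by norm_num) (by omega)
      have hsub : 2^j * (2^k - (a+1)) ≤ 2^k * 2^k - 2^k := by
        have h1 : 2^j * (2^k - (a+1)) ≤ 2^k * (2^k - 1) := Nat.mul_le_mul hjk (by omega)
        have h2 : 2^k * (2^k - 1) + 2^k = 2^k * 2^k := by
          rw [← Nat.mul_succ, Nat.succ_eq_add_one, Nat.sub_add_cancel h2k1]
        omega
      have hS : 2^k ≤ 2^k * 2^k := Nat.le_mul_of_pos_left _ (by positivity)
      have hx1 : 2^k * 2^k * 2 = 2^(2*k+1) := by rw [two_mul, pow_add, pow_add, pow_one]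
      have hDv : 2^(2*k+1) - 1 < 2 * ((2^(2*k+1) - 1) - 2^j * (2^k - (a+1))) := by omega
      have hP0 : 0 < 2^(2*k+1) - 1 := by omega
      have hPR : (0:ℝ) < ((2^(2*k+1) - 1 : ℕ):ℝ) := by exact_mod_cast hP0
      rw [lt_div_iff₀ hPR]
      have hcast : ((2^(2*k+1) - 1 : ℕ):ℝ) < 2 * (((2^(2*k+1) - 1) - 2^j * (2^k - (a+1)) : ℕ):ℝ) := by
        exact_mod_cast hDv
      linarith
    -- x ∈ PerPlus
    have hxmem : x ∈ PerPlus := by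
      refine ⟨⟨by positivity, ?_⟩, n, hn1, ?_, ?_⟩
      · rw [hx_def, div_le_one hDR]; exact_mod_cast le_of_lt hbD
      · rw [hx_def, hD_def, orbit n b hn1 hbD n]
        have : 2^n * b % (2^n - 1) = b := by
          have h1 : 2^n * b = b + (2^n - 1) * b := by
            rw [Nat.sub_mul, one_mul]
            have : b ≤ 2^n * b := Nat.le_mul_of_pos_left _ (by positivity)
            omega
          rw [h1, Nat.add_mul_mod_self_left, Nat.mod_eq_of_lt hbD]
        rw [this]
      · have hsup : Finset.Ico k n ⊆ (Finset.range n).filter (fun i => 1/2 < dbl^[i] x) := by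
          intro i hi
          rw [Finset.mem_Ico] at hi
          rw [Finset.mem_filter, Finset.mem_range]
          exact ⟨hi.2, hdigit i hi.1 hi.2⟩
        have hlow : (Finset.range n).filter (fun i => dbl^[i] x ≤ 1/2) ⊆ Finset.range k := by
          intro i hi
          rw [Finset.mem_filter, Finset.mem_range] at hi
          rw [Finset.mem_range]
          by_contra h
          push_neg at h
          exact absurd hi.2 (not_le.mpr (hdigit i h hi.1))
        have h1 : ((Finset.range n).filter (fun i => dbl^[i] x ≤ 1/2)).card ≤ k := by
          simpa using Finset.card_le_card hlow
        have h2 : k + 1 ≤ ((Finset.range n).filter (fun i => 1/2 < dbl^[i] x)).card := by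
          have := Finset.card_le_card hsup
          rwa [Nat.card_Ico, hn_def, show 2*k+1 - k = k+1 by omega] at this
        omega
    -- distance
    refine ⟨x, hxmem, ?_⟩
    have hP1 : (1:ℝ) ≤ 2^(k+1) := one_le_pow₀ (by norm_num)
    have hxlow : (a:ℝ)/2^k ≤ x := by
      rw [hx_def, div_le_div_iff₀ h2kR hDR, hbR, hDRval]
      have hpnR : (2:ℝ)^n = 2^(k+1) * 2^k := by rw [hn_def]; ring
      rw [hpnR]
      have ha0 : (0:ℝ) ≤ (a:ℝ) := Nat.cast_nonneg a
      nlinarith [mul_le_mul_of_nonneg_right hP1 (le_of_lt h2kR)]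
    have hxup : x ≤ ((a:ℝ)+2)/2^k := by
      rw [hx_def, div_le_div_iff₀ hDR h2kR, hbR, hDRval]
      have hpnR : (2:ℝ)^n = 2^(k+1) * 2^k := by rw [hn_def]; ring
      rw [hpnR]
      have haR : (a:ℝ) + 1 ≤ 2^k := by
        have h' : ((a+1:ℕ):ℝ) ≤ ((2^k:ℕ):ℝ) := by exact_mod_cast le_of_lt hcase
        push_cast at h'; linarith
      nlinarith [mul_le_mul_of_nonneg_right hP1 (le_of_lt h2kR), h2kR]
    have hsplit2 : ((a:ℝ)+2)/2^k = (a:ℝ)/2^k + 2*(1/2^k) := by ring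
    have hsplit1 : ((a:ℝ)+1)/2^k = (a:ℝ)/2^k + 1/2^k := by ring
    rw [Real.dist_eq, abs_lt]
    constructor
    · rw [hsplit2] at hxup
      linarith
    · rw [hsplit1] at hyup
      linarith
  · -- a = 2^k - 1 : use x = 1
    refine ⟨1, one_mem_perPlus, ?_⟩
    have ha : a = 2^k - 1 := by
      have := min_le_right (Nat.floor (y * 2^k)) (2^k - 1)
      omega
    have haR : (a:ℝ) = 2^k - 1 := by
      have h' : ((a:ℕ):ℝ) = ((2^k - 1 : ℕ):ℝ) := by exact_mod_cast congrArg (Nat.cast : ℕ → ℝ) ha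
      rw [h', Nat.cast_sub h2k1]; push_cast; ring
    have hfl' : (2:ℝ)^k - 1 ≤ y * 2^k := by rw [← haR]; exact hfl
    have h1 : 1 - 1/2^k ≤ y := by
      have h2 : ((2:ℝ)^k - 1)/2^k ≤ y := by rw [div_le_iff₀ h2kR]; linarith
      have h3 : ((2:ℝ)^k - 1)/2^k = 1 - 1/2^k := by field_simp
      linarith
    rw [Real.dist_eq, abs_lt]
    constructor
    · linarith
    · linarith
end
end

section
/- Let β₁, β₂ ∈ (0,1) satisfy (1−β₁)(1+β₂) < 1 (equivalently, β₁ > 1/2, or β₁ ≤ 1/2 and β₂ < 1/(1−β₁) − 1). Then the basin B(A₀) has positive two-dimensional Lebesgue measure, m₂(B(A₀)) > 0. -/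
/-!
Near the invariant fibre `y = 0` the fibre maps are almost linear: for `y ≤ ε`, `g₁,β₁` multiplies
`y` by at most `a = 1 - β₁ + ε(1 + β₁)` and `g₂,β₂` by at most `b = 1 + β₂`, and `ab < 1` for small
`ε`. So as long as it stays below `ε`, the fibre coordinate of `Fⁿ(x, y)` is at most `y · Pₙ(x)`,
where `Pₙ(x)` multiplies `a` or `b` along the first `n` points of the doubling orbit of `x`.
The binary digits of `x` are independent under Lebesgue measure, so `∫₀¹ Pₙ^t = ((a^t + b^t)/2)ⁿ`,
and `ab < 1` gives some `t > 0` with `a^t + b^t < 2`. Hence `∑ₙ Pₙ^t` is integrable, so it is at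
most some `N` on a set `S` of positive measure; there `Pₙ ≤ N^{1/t}` and `Pₙ → 0`, and
`S × [0, ε/(N^{1/t} + 1)]` lies in the basin.
-/

open MeasureTheory Filter Set

noncomputable section

/-- The fiber map `g₁,β(y) = y + y(1-y)(y-β)`. -/
def g1 (β y : ℝ) : ℝ := y + y * (1 - y) * (y - β)

/-- The fiber map `g₂,β(y) = y - y(1-y)(y-β)`. -/
def g2 (β y : ℝ) : ℝ := y - y * (1 - y) * (y - β)

/-- The skew product `F(x,y) = (f(x), g₁,β₁(y))` for `x ≤ 1/2` and
`F(x,y) = (f(x), g₂,β₂(y))` for `x > 1/2`. -/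
def Fsk (β1 β2 : ℝ) (p : ℝ × ℝ) : ℝ × ℝ :=
  if p.1 ≤ 1/2 then (dbl p.1, g1 β1 p.2) else (dbl p.1, g2 β2 p.2)

/-- The unit square `[0,1]²`. -/
def unitSq : Set (ℝ × ℝ) := Set.Icc (0:ℝ) 1 ×ˢ Set.Icc (0:ℝ) 1

/-- The basin of points of `[0,1]²` whose second coordinate tends to `c` under iteration
of the skew product. -/
def basin (β1 β2 c : ℝ) : Set (ℝ × ℝ) :=
  {p | p ∈ unitSq ∧ Tendsto (fun n : ℕ => ((Fsk β1 β2)^[n] p).2) atTop (nhds c)}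

open scoped ENNReal Topology

lemma exists_rpow_add_rpow_lt_two {a b : ℝ} (ha : 0 < a) (hb : 0 < b) (hab : a * b < 1) :
    ∃ t : ℝ, 0 < t ∧ a ^ t + b ^ t < 2 := by
  have hderiv : HasDerivAt (fun s : ℝ => a ^ s + b ^ s) (Real.log (a * b)) 0 := by
    rw [Real.log_mul ha.ne' hb.ne']
    simpa using (Real.hasStrictDerivAt_const_rpow ha 0).hasDerivAt.fun_add
      (Real.hasStrictDerivAt_const_rpow hb 0).hasDerivAt
  have hslope := (hasDerivWithinAt_iff_tendsto_slope' (s := Ioi 0) (lt_irrefl 0)).1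
    hderiv.hasDerivWithinAt
  obtain ⟨t, hslope, ht⟩ :=
    ((hslope.eventually_lt_const (Real.log_neg (by positivity) hab)).and
      self_mem_nhdsWithin).exists
  refine ⟨t, ht, ?_⟩
  simpa [one_add_one_eq_two] using (slope_neg_iff_of_le ht.le).1 hslope

lemma setLIntegral_preimage_comp_mul_add {a : ℝ} (ha : a ≠ 0) (c : ℝ) (φ : ℝ → ℝ≥0∞)
    (s : Set ℝ) :
    ∫⁻ x in (fun x => a * x + c) ⁻¹' s, φ (a * x + c)
      = ENNReal.ofReal |a⁻¹| * ∫⁻ x in s, φ x := by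
  have hemb : MeasurableEmbedding (fun x : ℝ => a * x + c) :=
    ((Homeomorph.mulLeft₀ a ha).trans (Homeomorph.addRight c)).measurableEmbedding
  have hmap : Measure.map (fun x : ℝ => a * x + c) volume = ENNReal.ofReal |a⁻¹| • volume := by
    rw [show (fun x : ℝ => a * x + c) = (· + c) ∘ (a * ·) from rfl,
      ← Measure.map_map (measurable_add_const c) (measurable_const_mul a),
      Real.map_volume_mul_left ha, Measure.map_smul, map_add_right_eq_self]
  rw [MeasurePreserving.setLIntegral_comp_preimage_emb ⟨hemb.measurable, hmap⟩ hemb,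
    Measure.restrict_smul, lintegral_smul_measure, smul_eq_mul]

lemma setLIntegral_Ioc_ite_mul_comp_dbl {φ : ℝ → ℝ≥0∞} (hφ : Measurable φ) (u v : ℝ≥0∞) :
    ∫⁻ x in Ioc (0:ℝ) 1, (if x ≤ 1/2 then u else v) * φ (dbl x)
      = (u + v) / 2 * ∫⁻ x in Ioc (0:ℝ) 1, φ x := by
  have hhalf : ENNReal.ofReal |(2:ℝ)⁻¹| = 2⁻¹ := by
    rw [abs_of_pos (by norm_num), ENNReal.ofReal_inv_of_pos two_pos, ENNReal.ofReal_ofNat]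
  have hleft : (fun x : ℝ => 2 * x + 0) ⁻¹' Ioc 0 1 = Ioc 0 (1/2) := by
    ext x; simp only [mem_preimage, mem_Ioc]; constructor <;> rintro ⟨h1, h2⟩ <;> constructor <;> linarith
  have hright : (fun x : ℝ => 2 * x + -1) ⁻¹' Ioc 0 1 = Ioc (1/2) 1 := by
    ext x; simp only [mem_preimage, mem_Ioc]; constructor <;> rintro ⟨h1, h2⟩ <;> constructor <;> linarith
  have hφ' : ∀ c : ℝ, Measurable fun x : ℝ => φ (2 * x + c) := fun c => by fun_prop
  have hint_left : ∫⁻ x in Ioc (0:ℝ) (1/2), (if x ≤ 1/2 then u else v) * φ (dbl x)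
      = u * (2⁻¹ * ∫⁻ x in Ioc (0:ℝ) 1, φ x) := by
    rw [← hhalf, ← setLIntegral_preimage_comp_mul_add two_ne_zero, hleft,
      ← lintegral_const_mul u (hφ' 0)]
    refine setLIntegral_congr_fun measurableSet_Ioc fun x hx => ?_
    simp only [dbl, if_pos hx.2, add_zero]
  have hint_right : ∫⁻ x in Ioc (1/2:ℝ) 1, (if x ≤ 1/2 then u else v) * φ (dbl x)
      = v * (2⁻¹ * ∫⁻ x in Ioc (0:ℝ) 1, φ x) := by
    rw [← hhalf, ← setLIntegral_preimage_comp_mul_add two_ne_zero, hright,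
      ← lintegral_const_mul v (hφ' (-1))]
    refine setLIntegral_congr_fun measurableSet_Ioc fun x hx => ?_
    simp only [dbl, if_neg (not_le.2 hx.1), sub_eq_add_neg]
  rw [← Ioc_union_Ioc_eq_Ioc (by norm_num : (0:ℝ) ≤ 1/2) (by norm_num : (1/2:ℝ) ≤ 1),
    lintegral_union measurableSet_Ioc (Ioc_disjoint_Ioc_of_le le_rfl), hint_left, hint_right,
    Ioc_union_Ioc_eq_Ioc (by norm_num) (by norm_num), ENNReal.div_eq_inv_mul]
  ring

def orbitProd (a b : ℝ) : ℕ → ℝ → ℝ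
  | 0, _ => 1
  | n + 1, x => (if x ≤ 1/2 then a else b) * orbitProd a b n (dbl x)

lemma orbitProd_nonneg {a b : ℝ} (ha : 0 ≤ a) (hb : 0 ≤ b) (n : ℕ) (x : ℝ) :
    0 ≤ orbitProd a b n x := by
  induction n generalizing x with
  | zero => exact zero_le_one
  | succ n ih => exact mul_nonneg (by split_ifs <;> assumption) (ih _)

lemma measurable_orbitProd (a b : ℝ) (n : ℕ) : Measurable (orbitProd a b n) := by
  have hdbl : Measurable dbl :=
    Measurable.ite measurableSet_Iic (measurable_const_mul 2) (by fun_prop)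
  induction n with
  | zero => exact measurable_const
  | succ n ih =>
    exact (Measurable.ite measurableSet_Iic measurable_const measurable_const).mul (ih.comp hdbl)

lemma setLIntegral_ofReal_orbitProd_rpow {a b : ℝ} (ha : 0 ≤ a) (hb : 0 ≤ b) (t : ℝ) (n : ℕ) :
    ∫⁻ x in Ioc (0:ℝ) 1, ENNReal.ofReal (orbitProd a b n x ^ t)
      = ((ENNReal.ofReal (a ^ t) + ENNReal.ofReal (b ^ t)) / 2) ^ n := by
  induction n with
  | zero => simp [orbitProd]
  | succ n ih =>
    have hstep : ∀ x, ENNReal.ofReal (orbitProd a b (n + 1) x ^ t)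
        = (if x ≤ 1/2 then ENNReal.ofReal (a ^ t) else ENNReal.ofReal (b ^ t))
          * ENNReal.ofReal (orbitProd a b n (dbl x) ^ t) := fun x => by
      have hw : 0 ≤ if x ≤ 1/2 then a else b := by split_ifs <;> assumption
      rw [orbitProd, Real.mul_rpow hw (orbitProd_nonneg ha hb n _),
        ENNReal.ofReal_mul (Real.rpow_nonneg hw t)]
      split_ifs <;> rfl
    simp_rw [hstep]
    rw [setLIntegral_Ioc_ite_mul_comp_dbl
      ((measurable_orbitProd a b n).pow_const t).ennreal_ofReal, ih, pow_succ, mul_comm]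

lemma setLIntegral_tsum_ofReal_orbitProd_rpow_ne_top {a b t : ℝ} (ha : 0 ≤ a) (hb : 0 ≤ b)
    (habt : a ^ t + b ^ t < 2) :
    ∫⁻ x in Ioc (0:ℝ) 1, ∑' n, ENNReal.ofReal (orbitProd a b n x ^ t) ≠ ∞ := by
  have hmean : (ENNReal.ofReal (a ^ t) + ENNReal.ofReal (b ^ t)) / 2 < 1 := by
    refine ENNReal.div_lt_of_lt_mul ?_
    rw [← ENNReal.ofReal_add (Real.rpow_nonneg ha t) (Real.rpow_nonneg hb t), one_mul,
      ← ENNReal.ofReal_ofNat]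
    exact (ENNReal.ofReal_lt_ofReal_iff two_pos).2 habt
  rw [lintegral_tsum fun n =>
      ((measurable_orbitProd a b n).pow_const t).ennreal_ofReal.aemeasurable]
  simp_rw [setLIntegral_ofReal_orbitProd_rpow ha hb]
  rw [ENNReal.tsum_geometric]
  exact ENNReal.inv_ne_top.2 (tsub_pos_of_lt hmean).ne'

lemma exists_nat_measure_inter_setOf_le_ne_zero {α : Type*} [MeasurableSpace α]
    {μ : Measure α} {s : Set α} {h : α → ℝ≥0∞} (hs : MeasurableSet s) (hμs : μ s ≠ 0)
    (hh : AEMeasurable h (μ.restrict s)) (hint : ∫⁻ x in s, h x ∂μ ≠ ∞) :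
    ∃ N : ℕ, μ (s ∩ {x | h x ≤ N}) ≠ 0 := by
  by_contra! hzero
  have hnot_le : ∀ᵐ x ∂μ.restrict s, ∀ N : ℕ, ¬ h x ≤ N := by
    refine ae_all_iff.2 fun N => ?_
    rw [ae_iff, Measure.restrict_apply' hs]
    simpa [inter_comm] using hzero N
  have hfalse : ∀ᵐ x ∂μ.restrict s, False := by
    filter_upwards [ae_lt_top' hh hint, hnot_le] with x hlt hnot
    obtain ⟨N, hN⟩ := ENNReal.exists_nat_gt hlt.ne
    exact hnot N hN.le
  exact hμs (Measure.restrict_eq_zero.1 (ae_eq_bot.1 (eventually_false_iff_eq_bot.1 hfalse)))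

section rpowSeries

variable {u : ℕ → ℝ} {t : ℝ}

lemma le_rpow_inv_of_tsum_ofReal_rpow_le {M : ℝ} (hu : ∀ n, 0 ≤ u n) (ht : 0 < t)
    (hM : 0 ≤ M) (h : ∑' n, ENNReal.ofReal (u n ^ t) ≤ ENNReal.ofReal M) (n : ℕ) :
    u n ≤ M ^ t⁻¹ :=
  (Real.le_rpow_inv_iff_of_pos (hu n) hM ht).2
    ((ENNReal.ofReal_le_ofReal_iff hM).1 ((ENNReal.le_tsum n).trans h))

lemma tendsto_zero_of_tsum_ofReal_rpow_ne_top (hu : ∀ n, 0 ≤ u n) (ht : 0 < t)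
    (h : ∑' n, ENNReal.ofReal (u n ^ t) ≠ ∞) : Tendsto u atTop (𝓝 0) := by
  have hpow : Tendsto (fun n => u n ^ t) atTop (𝓝 0) := by
    simpa [Function.comp_def, fun n => ENNReal.toReal_ofReal (Real.rpow_nonneg (hu n) t)] using
      (ENNReal.tendsto_toReal ENNReal.zero_ne_top).comp (ENNReal.tendsto_atTop_zero_of_tsum_ne_top h)
  simpa [Function.comp_def, Real.zero_rpow (inv_ne_zero ht.ne'),
    fun n => Real.rpow_rpow_inv (hu n) ht.ne'] using
    (Real.continuousAt_rpow_const 0 t⁻¹ (Or.inr (inv_pos.2 ht).le)).tendsto.comp hpow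

end rpowSeries

lemma g1_mem_Icc {β ε y : ℝ} (hβ0 : 0 ≤ β) (hβ1 : β ≤ 1) (hε : ε ≤ 1) (hy : y ∈ Icc 0 ε) :
    g1 β y ∈ Icc 0 ((1 - β + ε * (1 + β)) * y) := by
  obtain ⟨hy0, hyε⟩ := hy
  unfold g1
  constructor
  · nlinarith [mul_nonneg hy0 (sub_nonneg.2 (hyε.trans hε)), mul_nonneg hy0 hβ0]
  · nlinarith [mul_nonneg hy0 (sub_nonneg.2 hyε), mul_nonneg hy0 hy0]

lemma g2_mem_Icc {β y : ℝ} (hβ : 0 ≤ β) (hy : y ∈ Icc (0:ℝ) 1) :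
    g2 β y ∈ Icc 0 ((1 + β) * y) := by
  obtain ⟨hy0, hy1⟩ := hy
  unfold g2
  constructor
  · nlinarith [mul_nonneg hy0 (sub_nonneg.2 hy1), sq_nonneg (1 - 2 * y)]
  · nlinarith [mul_nonneg hy0 (sub_nonneg.2 hy1), mul_nonneg hy0 hy0]

section linearBounds

variable {β1 β2 a b ε : ℝ} (hg1 : ∀ y ∈ Icc 0 ε, g1 β1 y ∈ Icc 0 (a * y))
  (hg2 : ∀ y ∈ Icc 0 ε, g2 β2 y ∈ Icc 0 (b * y))
include hg1 hg2

lemma snd_iterate_Fsk_mem_Icc (ha : 0 ≤ a) (hb : 0 ≤ b) (n : ℕ) {x y : ℝ} (hy : 0 ≤ y)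
    (hbound : ∀ m, y * orbitProd a b m x ≤ ε) :
    ((Fsk β1 β2)^[n] (x, y)).2 ∈ Icc 0 (y * orbitProd a b n x) := by
  induction n generalizing x y with
  | zero => simpa [orbitProd] using hy
  | succ n ih =>
    have hyε : y ∈ Icc 0 ε := ⟨hy, by simpa [orbitProd] using hbound 0⟩
    obtain ⟨y', hy', hF⟩ : ∃ y' ∈ Icc 0 ((if x ≤ 1/2 then a else b) * y),
        Fsk β1 β2 (x, y) = (dbl x, y') := by
      unfold Fsk
      split_ifs
      exacts [⟨_, hg1 y hyε, rfl⟩, ⟨_, hg2 y hyε, rfl⟩]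
    have hle : ∀ m, y' * orbitProd a b m (dbl x) ≤ y * orbitProd a b (m + 1) x := fun m => by
      rw [orbitProd, ← mul_assoc, mul_comm y]
      exact mul_le_mul_of_nonneg_right hy'.2 (orbitProd_nonneg ha hb m _)
    rw [Function.iterate_succ_apply, hF]
    have hy'n := ih hy'.1 fun m => (hle m).trans (hbound (m + 1))
    exact ⟨hy'n.1, hy'n.2.trans (hle n)⟩

lemma mk_mem_basin_of_tendsto_orbitProd (ha : 0 ≤ a) (hb : 0 ≤ b) (hε : ε ≤ 1) {x y : ℝ}
    (hx : x ∈ Icc 0 1) (hy : 0 ≤ y) (hbound : ∀ n, y * orbitProd a b n x ≤ ε)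
    (hlim : Tendsto (fun n => orbitProd a b n x) atTop (𝓝 0)) :
    (x, y) ∈ basin β1 β2 0 := by
  have hiter := fun n => snd_iterate_Fsk_mem_Icc hg1 hg2 ha hb n hy hbound
  refine ⟨⟨hx, hy, (by simpa [orbitProd] using hbound 0 : y ≤ ε).trans hε⟩, ?_⟩
  exact tendsto_of_tendsto_of_tendsto_of_le_of_le tendsto_const_nhds
    (by simpa using hlim.const_mul y) (fun n => (hiter n).1) (fun n => (hiter n).2)

theorem volume_basin_pos_of_linear_bounds (ha : 0 < a) (hb : 0 < b) (hab : a * b < 1)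
    (hε : 0 < ε) (hε1 : ε ≤ 1) : 0 < volume (basin β1 β2 0) := by
  obtain ⟨t, ht, habt⟩ := exists_rpow_add_rpow_lt_two ha hb hab
  set P := orbitProd a b
  set h : ℝ → ℝ≥0∞ := fun x => ∑' n, ENNReal.ofReal (P n x ^ t)
  have hPnonneg := orbitProd_nonneg ha.le hb.le
  obtain ⟨N, hN⟩ := exists_nat_measure_inter_setOf_le_ne_zero measurableSet_Ioc (by simp)
    (Measurable.tsum fun n =>
      ((measurable_orbitProd a b n).pow_const t).ennreal_ofReal).aemeasurable
    (setLIntegral_tsum_ofReal_orbitProd_rpow_ne_top ha.le hb.le habt)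
  set C := (N : ℝ) ^ t⁻¹
  have hsub : (Ioc 0 1 ∩ {x | h x ≤ N}) ×ˢ Icc 0 (ε / (C + 1)) ⊆ basin β1 β2 0 := by
    rintro ⟨x, y⟩ ⟨⟨hx, hxN⟩, hy⟩
    have hPC := le_rpow_inv_of_tsum_ofReal_rpow_le (hPnonneg · x) ht (Nat.cast_nonneg N)
      (by simpa using hxN)
    refine mk_mem_basin_of_tendsto_orbitProd hg1 hg2 ha.le hb.le hε1 (Ioc_subset_Icc_self hx)
      hy.1 (fun n => ?_) (tendsto_zero_of_tsum_ofReal_rpow_ne_top (hPnonneg · x) ht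
        (hxN.trans_lt (ENNReal.natCast_lt_top N)).ne)
    calc y * P n x ≤ ε / (C + 1) * (C + 1) :=
          mul_le_mul hy.2 (by linarith [hPC n]) (hPnonneg n x) (by positivity)
      _ = ε := div_mul_cancel₀ _ (by positivity)
  refine lt_of_lt_of_le ?_ (measure_mono hsub)
  rw [Measure.volume_eq_prod, Measure.prod_prod, Real.volume_Icc]
  exact ENNReal.mul_pos hN (by simpa using div_pos hε (by positivity))

end linearBounds

theorem stmt5 (β1 β2 : ℝ) (hβ1 : β1 ∈ Set.Ioo (0:ℝ) 1) (hβ2 : β2 ∈ Set.Ioo (0:ℝ) 1)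
    (hcond : (1 - β1) * (1 + β2) < 1) :
    0 < volume (basin β1 β2 0) := by
  obtain ⟨hβ10, hβ11⟩ := hβ1
  obtain ⟨hβ20, -⟩ := hβ2
  have hlim : Tendsto (fun ε : ℝ => (1 - β1 + ε * (1 + β1)) * (1 + β2)) (𝓝 0)
      (𝓝 ((1 - β1) * (1 + β2))) := by
    exact (by fun_prop : Continuous fun ε : ℝ => (1 - β1 + ε * (1 + β1)) * (1 + β2)).tendsto' 0 _
      (by simp)
  obtain ⟨ε, ⟨hab, hε1⟩, hε⟩ := (((hlim.eventually (gt_mem_nhds hcond)).and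
    (eventually_le_nhds one_pos)).filter_mono nhdsWithin_le_nhds |>.and
      (self_mem_nhdsWithin : Ioi (0:ℝ) ∈ 𝓝[>] 0)).exists
  exact volume_basin_pos_of_linear_bounds (fun y hy => g1_mem_Icc hβ10.le hβ11.le hε1 hy)
    (fun y hy => g2_mem_Icc hβ20.le ⟨hy.1, hy.2.trans hε1⟩)
    (by nlinarith) (by linarith) hab hε hε1
end
end

section
/- Let β₁, β₂ ∈ (0,1) satisfy (1−β₁)(1+β₂) < 1. Then the invariant set A₀ = [0,1] × {0} has a locally riddled basin: there exists a relatively open set U ⊆ [0,1]² containing A₀ such that for every point p ∈ A₀ and every ε > 0, the set of points q ∈ [0,1]² with dist(q,p) < ε and Fⁿ(q) ∉ U for some n ≥ 0 has positive two-dimensional Lebesgue measure. -/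
open MeasureTheory Filter Set

noncomputable section

/-- The invariant set `A₀ = [0,1] × {0}`. -/
def A0 : Set (ℝ × ℝ) := Set.Icc (0:ℝ) 1 ×ˢ ({0} : Set ℝ)

lemma g1_props (β y : ℝ) (hβ0 : 0 < β) (hβ1 : β < 1) (hy0 : 0 < y) (hy1 : y < 1) :
    (1-β)*y ≤ g1 β y ∧ 0 < g1 β y ∧ g1 β y < 1 := by
  unfold g1
  refine ⟨by nlinarith [sq_nonneg y, mul_pos hy0 hy0], ?_, ?_⟩
  · nlinarith [mul_pos hy0 (sub_pos.2 hy1), mul_pos (mul_pos hy0 (sub_pos.2 hy1)) hβ0]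
  · nlinarith [mul_pos hy0 (sub_pos.2 hy1), mul_pos (mul_pos hy0 (sub_pos.2 hy1)) hβ0]

lemma g2_props (β y : ℝ) (hβ0 : 0 < β) (hβ1 : β < 1) (hy0 : 0 < y) (hy1 : y < 1) :
    (3/4)*y ≤ g2 β y ∧ 0 < g2 β y ∧ g2 β y < 1 := by
  unfold g2
  refine ⟨by nlinarith [sq_nonneg (1 - 2*y), mul_pos hy0 (sub_pos.2 hy1)], ?_, ?_⟩
  · nlinarith [sq_nonneg (1 - 2*y), mul_pos hy0 (sub_pos.2 hy1)]
  · nlinarith [mul_pos hy0 (sub_pos.2 hy1), mul_pos (mul_pos hy0 (sub_pos.2 hy1)) hβ0]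

lemma g2_exp (β y : ℝ) (hβ0 : 0 < β) (hβ1 : β < 1) (hy0 : 0 ≤ y) (hy : y ≤ β/2) :
    (1 + (1 - β/2)*(β/2)) * y ≤ g2 β y := by
  unfold g2
  have h1 : 1 - β/2 ≤ 1 - y := by linarith
  have h2 : β/2 ≤ β - y := by linarith
  nlinarith [mul_le_mul h1 h2 (by linarith) (by linarith),
    mul_nonneg hy0 (mul_nonneg (by linarith : (0:ℝ) ≤ 1 - β/2) (by linarith : (0:ℝ) ≤ β/2))]

lemma dbl_iter_affine : ∀ (m j : ℕ) (x : ℝ), j + 1 ≤ 2^m →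
    (j:ℝ) < 2^m * x → 2^m * x < (j:ℝ) + 1 → dbl^[m] x = 2^m * x - j := by
  intro m
  induction m with
  | zero =>
    intro j x hj h1 h2
    have hj0 : j = 0 := by omega
    subst hj0
    simp at h1 h2 ⊢
    try linarith
  | succ m ih =>
    intro j x hj h1 h2
    have hpow : ((2:ℝ)^(m+1)) = 2^m * 2 := by ring
    have hpm : (0:ℝ) < 2^m := by positivity
    rw [Function.iterate_succ_apply]
    by_cases hc : j + 1 ≤ 2^m
    · have hx : x ≤ 1/2 := by
        have : (2:ℝ)^(m+1) * x < 2^m := by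
          calc (2:ℝ)^(m+1) * x < (j:ℝ) + 1 := h2
          _ ≤ (2^m : ℕ) := by exact_mod_cast Nat.cast_le.2 hc
          _ = (2:ℝ)^m := by push_cast; ring
        nlinarith
      have hdbl : dbl x = 2*x := by unfold dbl; rw [if_pos hx]
      rw [hdbl, ih j (2*x) hc (by nlinarith) (by nlinarith)]
      ring
    · have hge : 2^m ≤ j := by omega
      have hgeR : ((2:ℝ)^m) ≤ (j:ℝ) := by exact_mod_cast Nat.cast_le.2 hge
      have hx : ¬ x ≤ 1/2 := by nlinarith
      have hdbl : dbl x = 2*x - 1 := by unfold dbl; rw [if_neg hx]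
      have hcast : ((j - 2^m : ℕ) : ℝ) = (j:ℝ) - 2^m := by
        push_cast [Nat.cast_sub hge]; ring
      rw [hdbl, ih (j - 2^m) (2*x - 1) (by omega) (by rw [hcast]; nlinarith)
        (by rw [hcast]; nlinarith)]
      rw [hcast]
      ring

lemma dbl_tail : ∀ (N : ℕ) (x : ℝ), 1 - 1/2^N < x → x < 1 →
    ∀ k, k < N → 1/2 < dbl^[k] x := by
  intro N
  induction N with
  | zero => intro x _ _ k hk; omega
  | succ N ih =>
    intro x h1 h2 k hk
    have hN : (1:ℝ) ≤ 2^N := one_le_pow₀ (by norm_num)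
    have hpow : (1:ℝ)/2^(N+1) ≤ 1/2 := by
      rw [div_le_div_iff₀ (by positivity) (by norm_num)]
      have : (2:ℝ)^(N+1) = 2^N * 2 := by ring
      nlinarith
    have hx2 : 1/2 < x := by linarith
    cases k with
    | zero => simpa using hx2
    | succ k =>
      rw [Function.iterate_succ_apply]
      have hdbl : dbl x = 2*x - 1 := by unfold dbl; rw [if_neg (by linarith)]
      refine ih (dbl x) ?_ (by rw [hdbl]; linarith) k (by omega)
      rw [hdbl]
      have : (1:ℝ)/2^(N+1) = (1/2^N)/2 := by ring
      rw [this] at h1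
      linarith

lemma Fsk_fst (β1 β2 : ℝ) (p : ℝ × ℝ) : (Fsk β1 β2 p).1 = dbl p.1 := by
  unfold Fsk; split <;> rfl

lemma Fsk_snd (β1 β2 : ℝ) (p : ℝ × ℝ) :
    (Fsk β1 β2 p).2 = if p.1 ≤ 1/2 then g1 β1 p.2 else g2 β2 p.2 := by
  unfold Fsk; split <;> rfl

lemma Fsk_iter_fst (β1 β2 : ℝ) (q : ℝ × ℝ) (n : ℕ) :
    ((Fsk β1 β2)^[n] q).1 = dbl^[n] q.1 := by
  induction n with
  | zero => rfl
  | succ n ih =>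
    rw [Function.iterate_succ_apply', Function.iterate_succ_apply', Fsk_fst, ih]

lemma Fsk_iter_snd_succ (β1 β2 : ℝ) (q : ℝ × ℝ) (n : ℕ) :
    ((Fsk β1 β2)^[n+1] q).2 =
      if dbl^[n] q.1 ≤ 1/2 then g1 β1 (((Fsk β1 β2)^[n] q).2)
      else g2 β2 (((Fsk β1 β2)^[n] q).2) := by
  have h := Fsk_iter_fst β1 β2 q n
  rw [Function.iterate_succ_apply', Fsk_snd, h]

theorem stmt6 (β1 β2 : ℝ) (hβ1 : β1 ∈ Set.Ioo (0:ℝ) 1) (hβ2 : β2 ∈ Set.Ioo (0:ℝ) 1)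
    (hcond : (1 - β1) * (1 + β2) < 1) :
    ∃ U : Set (ℝ × ℝ), (∃ V : Set (ℝ × ℝ), IsOpen V ∧ U = V ∩ unitSq) ∧ A0 ⊆ U ∧
      ∀ p ∈ A0, ∀ ε > (0:ℝ),
        0 < volume {q : ℝ × ℝ | q ∈ unitSq ∧ dist q p < ε ∧
          ∃ n : ℕ, (Fsk β1 β2)^[n] q ∉ U} := by
  obtain ⟨hβ10, hβ11⟩ := hβ1
  obtain ⟨hβ20, hβ21⟩ := hβ2
  set c : ℝ := β2/2 with hc
  have hc0 : 0 < c := by positivity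
  have hc1 : c < 1 := by simp only [hc]; linarith
  set ρ₀ : ℝ := (1 - β2/2)*(β2/2) with hρ₀
  have hρ₀0 : 0 < ρ₀ := by
    apply mul_pos <;> linarith
  set ρ : ℝ := min (1-β1) (3/4) with hρ
  have hρ0 : 0 < ρ := lt_min (by linarith) (by norm_num)
  have hρle1 : ρ ≤ 1 := le_trans (min_le_right _ _) (by norm_num)
  refine ⟨{p : ℝ × ℝ | p.2 < c} ∩ unitSq,
    ⟨{p : ℝ × ℝ | p.2 < c}, isOpen_lt continuous_snd continuous_const, rfl⟩, ?_, ?_⟩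
  · rintro ⟨x, y⟩ ⟨hx, hy⟩
    simp only [mem_singleton_iff] at hy
    subst hy
    exact ⟨by simpa using hc0, hx, by norm_num⟩
  · rintro ⟨x₀, y₀⟩ ⟨hx₀, hy₀⟩ ε hε
    simp only [mem_singleton_iff] at hy₀
    subst hy₀
    -- choose parameters
    set b : ℝ := min ε c with hbdef
    have hb0 : 0 < b := lt_min hε hc0
    have hbε : b ≤ ε := min_le_left _ _
    have hbc : b ≤ c := min_le_right _ _
    set a : ℝ := b/2 with hadef
    have ha0 : 0 < a := by positivity
    have hab : a < b := by simp only [hadef]; linarith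
    obtain ⟨m, hm⟩ : ∃ m : ℕ, (1/2:ℝ)^m < ε := exists_pow_lt_of_lt_one hε (by norm_num)
    have hmpow : (1:ℝ)/2^m < ε := by rwa [one_div_pow] at hm
    have hρma : 0 < ρ^m * a := by positivity
    obtain ⟨N, hN⟩ : ∃ N : ℕ, c/(ρ^m * a) < (1+ρ₀)^N :=
      pow_unbounded_of_one_lt _ (by linarith)
    have hNc : c < (1+ρ₀)^N * (ρ^m * a) := by
      rw [div_lt_iff₀ hρma] at hN
      linarith [hN]
    -- choose the dyadic interval around x₀
    have h2m : (0:ℝ) < 2^m := by positivity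
    have h2mN : (1:ℕ) ≤ 2^m := Nat.one_le_two_pow
    set j : ℕ := min (Nat.floor (x₀ * 2^m)) (2^m - 1) with hjdef
    have hj1 : j + 1 ≤ 2^m := by
      have : j ≤ 2^m - 1 := min_le_right _ _
      omega
    have hj2 : (j:ℝ) ≤ x₀ * 2^m := by
      have h1 : (j:ℕ) ≤ Nat.floor (x₀ * 2^m) := min_le_left _ _
      have h2 : (Nat.floor (x₀ * 2^m) : ℝ) ≤ x₀ * 2^m :=
        Nat.floor_le (mul_nonneg hx₀.1 (le_of_lt h2m))
      calc (j:ℝ) ≤ (Nat.floor (x₀ * 2^m) : ℝ) := by exact_mod_cast h1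
        _ ≤ x₀ * 2^m := h2
    have hj3 : x₀ * 2^m ≤ (j:ℝ) + 1 := by
      rcases min_cases (Nat.floor (x₀ * 2^m)) (2^m - 1) with ⟨heq, _⟩ | ⟨heq, _⟩
      · rw [hjdef, heq]
        exact le_of_lt (Nat.lt_floor_add_one _)
      · rw [hjdef, heq]
        have : ((2^m - 1 : ℕ) : ℝ) + 1 = 2^m := by
          push_cast [Nat.cast_sub h2mN]
          ring
        rw [this]
        calc x₀ * 2^m ≤ 1 * 2^m := by
              apply mul_le_mul_of_nonneg_right hx₀.2 (le_of_lt h2m)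
          _ = 2^m := by ring
    have h2Npos : (0:ℝ) < 1/2^N := by positivity
    have h2Nle : (1:ℝ)/2^N ≤ 1 := by
      rw [div_le_one (by positivity)]
      exact one_le_pow₀ (by norm_num)
    -- the rectangle of escaping points
    set x1 : ℝ := ((j:ℝ) + 1 - 1/2^N)/2^m with hx1def
    set x2 : ℝ := ((j:ℝ) + 1)/2^m with hx2def
    have hx1x2 : x1 < x2 := by
      rw [hx1def, hx2def, div_lt_div_iff₀ h2m h2m]
      nlinarith [h2Npos, h2m]
    have hsub : Ioo x1 x2 ×ˢ Ioo a b ⊆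
        {q : ℝ × ℝ | q ∈ unitSq ∧ dist q (x₀, (0:ℝ)) < ε ∧
          ∃ n : ℕ, (Fsk β1 β2)^[n] q ∉ {p : ℝ × ℝ | p.2 < c} ∩ unitSq} := by
      rintro ⟨x, y⟩ ⟨⟨hxl, hxr⟩, hyl, hyr⟩
      -- basic bounds on x
      have hxmul_l : (j:ℝ) + 1 - 1/2^N < 2^m * x := by
        rw [hx1def, div_lt_iff₀ h2m] at hxl
        linarith [hxl]
      have hxmul_r : 2^m * x < (j:ℝ) + 1 := by
        rw [hx2def, lt_div_iff₀ h2m] at hxr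
        linarith [hxr]
      have hxmul_l0 : (j:ℝ) < 2^m * x := by linarith
      have hjleR : ((j:ℝ)+1) ≤ 2^m := by
        have := (Nat.cast_le (α := ℝ)).2 hj1
        push_cast at this
        linarith
      have hx01 : 0 ≤ x ∧ x ≤ 1 := by
        constructor
        · by_contra h
          push_neg at h
          have h1 : 2^m * x < 0 := mul_neg_of_pos_of_neg h2m h
          have h2 : (0:ℝ) ≤ (j:ℝ) := Nat.cast_nonneg j
          linarith
        · by_contra h
          push_neg at h
          have h1 : 2^m * 1 < 2^m * x := by
            exact mul_lt_mul_of_pos_left h h2m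
          rw [mul_one] at h1
          linarith
      have hy01 : 0 < y ∧ y < 1 := ⟨lt_trans ha0 hyl, by linarith [lt_of_lt_of_le (lt_of_lt_of_le hyr hbc) (le_of_lt hc1)]⟩
      refine ⟨⟨⟨hx01.1, hx01.2⟩, ⟨le_of_lt hy01.1, le_of_lt hy01.2⟩⟩, ?_, ?_⟩
      · -- distance bound
        rw [Prod.dist_eq]
        apply max_lt
        · rw [Real.dist_eq, abs_lt]
          constructor
          · -- -(ε) < x - x₀
            have : x₀ ≤ ((j:ℝ)+1)/2^m := by
              rw [le_div_iff₀ h2m]; linarith [hj3]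
            have hxx : x > (j:ℝ)/2^m := by
              rw [gt_iff_lt, div_lt_iff₀ h2m]; linarith [hxmul_l0]
            have h1m : ((j:ℝ)+1)/2^m - (j:ℝ)/2^m = 1/2^m := by ring
            linarith [hmpow]
          · have : (j:ℝ)/2^m ≤ x₀ := by
              rw [div_le_iff₀ h2m]; linarith [hj2]
            have hxx : x < ((j:ℝ)+1)/2^m := by
              rw [lt_div_iff₀ h2m]; linarith [hxmul_r]
            have h1m : ((j:ℝ)+1)/2^m - (j:ℝ)/2^m = 1/2^m := by ring
            linarith [hmpow]
        · rw [Real.dist_eq, sub_zero, abs_of_pos hy01.1]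
          linarith [lt_of_lt_of_le hyr hbε]
      · -- escape
        by_contra hcon
        push_neg at hcon
        -- so every iterate is in U
        set q : ℝ × ℝ := (x, y) with hqdef
        set Y : ℕ → ℝ := fun n => ((Fsk β1 β2)^[n] q).2 with hYdef
        have hYlt : ∀ n, Y n < c := by
          intro n
          have := hcon n
          rcases this with ⟨h1, _⟩
          exact h1
        -- positivity invariant
        have hYpos : ∀ n, 0 < Y n ∧ Y n < 1 := by
          intro n
          induction n with
          | zero => exact ⟨hy01.1, hy01.2⟩
          | succ n ihn =>
            have hs := Fsk_iter_snd_succ β1 β2 q n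
            simp only [hYdef] at ihn ⊢
            rw [hs]
            split
            · exact ⟨(g1_props β1 _ hβ10 hβ11 ihn.1 ihn.2).2.1,
                (g1_props β1 _ hβ10 hβ11 ihn.1 ihn.2).2.2⟩
            · exact ⟨(g2_props β2 _ hβ20 hβ21 ihn.1 ihn.2).2.1,
                (g2_props β2 _ hβ20 hβ21 ihn.1 ihn.2).2.2⟩
        -- prefix lower bound
        have hYpre : ∀ n, ρ^n * y ≤ Y n := by
          intro n
          induction n with
          | zero => simp [hYdef, hqdef]
          | succ n ihn =>
            have hs := Fsk_iter_snd_succ β1 β2 q n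
            have hYn := hYpos n
            simp only [hYdef] at ihn hYn ⊢
            rw [hs]
            have hstep : ρ * Y n ≤ (if dbl^[n] q.1 ≤ 1/2 then g1 β1 (Y n) else g2 β2 (Y n)) := by
              split
              · exact le_trans (mul_le_mul_of_nonneg_right (min_le_left _ _) (le_of_lt hYn.1))
                  (g1_props β1 _ hβ10 hβ11 hYn.1 hYn.2).1
              · exact le_trans (mul_le_mul_of_nonneg_right (min_le_right _ _) (le_of_lt hYn.1))
                  (g2_props β2 _ hβ20 hβ21 hYn.1 hYn.2).1
            calc ρ^(n+1) * y = ρ * (ρ^n * y) := by ring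
              _ ≤ ρ * Y n := mul_le_mul_of_nonneg_left ihn (le_of_lt hρ0)
              _ ≤ _ := hstep
        -- position after the prefix
        have hxm : dbl^[m] x = 2^m * x - j :=
          dbl_iter_affine m j x hj1 hxmul_l0 hxmul_r
        have hxm1 : 1 - 1/2^N < dbl^[m] x := by rw [hxm]; linarith [hxmul_l]
        have hxm2 : dbl^[m] x < 1 := by rw [hxm]; linarith [hxmul_r]
        -- tail: x-iterates stay in the right half
        have htail : ∀ k, k < N → 1/2 < dbl^[m+k] x := by
          intro k hk
          have : dbl^[m+k] x = dbl^[k] (dbl^[m] x) := by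
            rw [add_comm, Function.iterate_add_apply]
          rw [this]
          exact dbl_tail N (dbl^[m] x) hxm1 hxm2 k hk
        -- growth along the tail
        have hgrow : ∀ k, k ≤ N → (1+ρ₀)^k * (ρ^m * a) ≤ Y (m+k) := by
          intro k hk
          induction k with
          | zero =>
            simp only [pow_zero, one_mul, Nat.add_zero]
            calc ρ^m * a ≤ ρ^m * y := mul_le_mul_of_nonneg_left (le_of_lt hyl) (by positivity)
              _ ≤ Y m := hYpre m
          | succ k ihk =>
            have hkN : k < N := by omega
            have hprev := ihk (by omega)
            have hs := Fsk_iter_snd_succ β1 β2 q (m+k)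
            have hcond2 : ¬ dbl^[m+k] q.1 ≤ 1/2 := by
              simp only [hqdef]
              push_neg
              exact htail k hkN
            have hYmk := hYpos (m+k)
            have hYmkc : Y (m+k) < c := hYlt (m+k)
            have : Y (m+k+1) = g2 β2 (Y (m+k)) := by
              simp only [hYdef]
              rw [hs, if_neg hcond2]
            rw [show m + (k+1) = m + k + 1 by omega, this]
            calc (1+ρ₀)^(k+1) * (ρ^m * a) = (1+ρ₀) * ((1+ρ₀)^k * (ρ^m * a)) := by ring
              _ ≤ (1+ρ₀) * Y (m+k) := mul_le_mul_of_nonneg_left hprev (by linarith)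
              _ = (1 + (1 - β2/2)*(β2/2)) * Y (m+k) := by rw [hρ₀]
              _ ≤ g2 β2 (Y (m+k)) := g2_exp β2 _ hβ20 hβ21 (le_of_lt hYmk.1) (by rw [← hc]; linarith [hYmkc])
        have hfinal := hgrow N (le_refl N)
        have := hYlt (m+N)
        linarith [hNc, hfinal, this]
    -- measure computation
    have hvol : (0:ENNReal) < volume (Ioo x1 x2 ×ˢ Ioo a b) := by
      rw [Measure.volume_eq_prod, Measure.prod_prod, Real.volume_Ioo, Real.volume_Ioo]
      apply ENNReal.mul_pos
      · simp only [ne_eq, ENNReal.ofReal_eq_zero, not_le]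
        exact sub_pos.2 hx1x2
      · simp only [ne_eq, ENNReal.ofReal_eq_zero, not_le]
        exact sub_pos.2 hab
    exact lt_of_lt_of_le hvol (measure_mono hsub)
end
end

section
/- Let β₁, β₂ ∈ (0,1) satisfy β₁(2−β₂) < 1 (equivalently, β₁ < 1/2, or β₁ ≥ 1/2 and β₂ > 2 − 1/β₁). Then the basin B(A₁) has positive two-dimensional Lebesgue measure, m₂(B(A₁)) > 0. -/
open MeasureTheory Filter Set

noncomputable section

/-!
Near `y = 1` the fibre maps contract the distance to `1` by the factors `β₁ + 2ε` (for `g₁`) and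
`2 - β₂` (for `g₂`) as long as `1 - y ≤ ε`. Along the orbit of `(x, y)` the distance `1 - yₙ` is
therefore at most `ε` times the exponential of a Birkhoff sum, over the doubling map, of the
logarithm of this rate. The doubling map preserves Lebesgue measure on `[0,1]` and the mean of the
log-rate is `log ((β₁ + 2ε)(2 - β₂)) / 2 < 0` for small `ε`. By the maximal ergodic theorem, the
Birkhoff sums of log-rate minus a negative constant `c` stay nonpositive for a set of `x` of
positive measure; for these `x` and all `y ∈ [1 - ε, 1]`, `1 - yₙ ≤ ε e^{cn} → 0`.
-/

section MaximalErgodic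

variable {α : Type*} {f : α → α} {g : α → ℝ}

lemma birkhoffSum_sub_const (f : α → α) (g : α → ℝ) (c : ℝ) (n : ℕ) (x : α) :
    birkhoffSum f (fun y => g y - c) n x = birkhoffSum f g n x - n * c := by
  simp [birkhoffSum, Finset.sum_sub_distrib]

/-- `birkhoffMax f g N x = max_{n ≤ N} birkhoffSum f g n x`. -/
def birkhoffMax (f : α → α) (g : α → ℝ) : ℕ → α → ℝ
  | 0 => 0
  | N + 1 => fun x => max 0 (g x + birkhoffMax f g N (f x))

lemma birkhoffMax_succ (N : ℕ) (x : α) :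
    birkhoffMax f g (N + 1) x = max 0 (g x + birkhoffMax f g N (f x)) :=
  rfl

lemma birkhoffMax_nonneg (N : ℕ) (x : α) : 0 ≤ birkhoffMax f g N x := by
  cases N with
  | zero => rfl
  | succ N => exact le_max_left _ _

lemma birkhoffMax_le_succ (N : ℕ) (x : α) : birkhoffMax f g N x ≤ birkhoffMax f g (N + 1) x := by
  induction N generalizing x with
  | zero => exact le_max_left _ _
  | succ N ih => exact max_le_max le_rfl (add_le_add_right (ih (f x)) _)

lemma monotone_birkhoffMax (x : α) : Monotone fun N => birkhoffMax f g N x :=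
  monotone_nat_of_le_succ fun N => birkhoffMax_le_succ N x

lemma birkhoffSum_le_birkhoffMax (n : ℕ) (x : α) : birkhoffSum f g n x ≤ birkhoffMax f g n x := by
  induction n generalizing x with
  | zero => simp [birkhoffMax]
  | succ n ih =>
    rw [birkhoffSum_succ']
    exact (add_le_add_right (ih (f x)) _).trans (le_max_right _ _)

lemma exists_birkhoffMax_eq_birkhoffSum (N : ℕ) (x : α) :
    ∃ n, birkhoffMax f g N x = birkhoffSum f g n x := by
  induction N generalizing x with
  | zero => exact ⟨0, by simp [birkhoffMax]⟩
  | succ N ih =>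
    obtain ⟨n, hn⟩ := ih (f x)
    rcases max_choice 0 (g x + birkhoffMax f g N (f x)) with h | h
    · exact ⟨0, by rw [birkhoffMax_succ, h, birkhoffSum_zero]⟩
    · exact ⟨n + 1, by rw [birkhoffMax_succ, h, hn, birkhoffSum_succ']⟩

lemma setOf_exists_birkhoffSum_pos :
    {x | ∃ n, 0 < birkhoffSum f g n x} = ⋃ N, {x | 0 < birkhoffMax f g N x} := by
  ext x
  simp only [mem_ofPred_eq, mem_iUnion]
  constructor
  · rintro ⟨n, hn⟩
    exact ⟨n, hn.trans_le (birkhoffSum_le_birkhoffMax n x)⟩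
  · rintro ⟨N, hN⟩
    obtain ⟨n, hn⟩ := exists_birkhoffMax_eq_birkhoffSum (f := f) (g := g) N x
    exact ⟨n, hn ▸ hN⟩

lemma birkhoffMax_sub_birkhoffMax_comp_le (N : ℕ) (x : α) :
    birkhoffMax f g N x - birkhoffMax f g N (f x) ≤
      {x | 0 < birkhoffMax f g N x}.indicator g x := by
  by_cases hx : 0 < birkhoffMax f g N x
  · rw [indicator_of_mem (show x ∈ {x | 0 < birkhoffMax f g N x} from hx)]
    cases N with
    | zero => exact absurd hx (lt_irrefl 0)
    | succ N =>
      have hmax : birkhoffMax f g (N + 1) x = g x + birkhoffMax f g N (f x) :=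
        max_eq_right ((lt_max_iff.mp hx).resolve_left (lt_irrefl 0)).le
      linarith [birkhoffMax_le_succ (f := f) (g := g) N (f x)]
  · rw [indicator_of_notMem (show x ∉ {x | 0 < birkhoffMax f g N x} from hx)]
    linarith [birkhoffMax_nonneg (f := f) (g := g) N (f x)]

variable [MeasurableSpace α] {μ : Measure α}

lemma integrable_birkhoffMax (hf : MeasurePreserving f μ μ) (hg : Integrable g μ) (N : ℕ) :
    Integrable (birkhoffMax f g N) μ := by
  induction N with
  | zero => exact integrable_zero _ _ _
  | succ N ih => exact (integrable_zero _ _ μ).sup (hg.add (hf.integrable_comp_of_integrable ih))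

lemma nullMeasurableSet_birkhoffMax_pos (hf : MeasurePreserving f μ μ) (hg : Integrable g μ)
    (N : ℕ) : NullMeasurableSet {x | 0 < birkhoffMax f g N x} μ :=
  nullMeasurableSet_lt aestronglyMeasurable_const.aemeasurable
    (integrable_birkhoffMax hf hg N).aemeasurable

lemma setIntegral_birkhoffMax_pos_nonneg (hf : MeasurePreserving f μ μ) (hg : Integrable g μ)
    (N : ℕ) : 0 ≤ ∫ x in {x | 0 < birkhoffMax f g N x}, g x ∂μ := by
  have hM := integrable_birkhoffMax hf hg N
  have hMf : Integrable (fun x => birkhoffMax f g N (f x)) μ := hf.integrable_comp_of_integrable hM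
  have hA := nullMeasurableSet_birkhoffMax_pos hf hg N
  have hinv : ∫ x, birkhoffMax f g N (f x) ∂μ = ∫ x, birkhoffMax f g N x ∂μ := by
    rw [← integral_map hf.aemeasurable (by rw [hf.map_eq]; exact hM.aestronglyMeasurable),
      hf.map_eq]
  calc (0 : ℝ) = ∫ x, (birkhoffMax f g N x - birkhoffMax f g N (f x)) ∂μ := by
        rw [integral_sub hM hMf, hinv, sub_self]
    _ ≤ ∫ x, {x | 0 < birkhoffMax f g N x}.indicator g x ∂μ :=
        integral_mono (hM.sub hMf) (hg.indicator₀ hA) (birkhoffMax_sub_birkhoffMax_comp_le N)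
    _ = _ := integral_indicator₀ hA

/-- The maximal ergodic theorem (Garsia's proof). -/
theorem setIntegral_exists_birkhoffSum_pos_nonneg (hf : MeasurePreserving f μ μ)
    (hg : Integrable g μ) : 0 ≤ ∫ x in {x | ∃ n, 0 < birkhoffSum f g n x}, g x ∂μ := by
  rw [setOf_exists_birkhoffSum_pos]
  exact ge_of_tendsto' (tendsto_setIntegral_of_monotone₀ (nullMeasurableSet_birkhoffMax_pos hf hg)
      (fun M N hMN x hx => hx.trans_le (monotone_birkhoffMax x hMN)) hg.integrableOn)
    (setIntegral_birkhoffMax_pos_nonneg hf hg)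

theorem measure_forall_birkhoffSum_nonpos_pos (hf : MeasurePreserving f μ μ)
    (hg : Integrable g μ) (hneg : ∫ x, g x ∂μ < 0) :
    0 < μ {x | ∀ n, birkhoffSum f g n x ≤ 0} := by
  refine pos_iff_ne_zero.mpr fun h0 => hneg.not_ge ?_
  rw [← setIntegral_eq_integral_of_ae_compl_eq_zero (s := {x | ∃ n, 0 < birkhoffSum f g n x})]
  · exact setIntegral_exists_birkhoffSum_pos_nonneg hf hg
  · filter_upwards [measure_eq_zero_iff_ae_notMem.mp h0] with x hx hx'
    exact absurd (by simpa using hx') hx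

end MaximalErgodic

lemma measurable_dbl : Measurable dbl :=
  Measurable.ite measurableSet_Iic (by fun_prop) (by fun_prop)

lemma volume_dbl_preimage_inter_Icc {s : Set ℝ} (hs : MeasurableSet s) :
    volume (dbl ⁻¹' s ∩ Icc 0 1) = volume (s ∩ Icc 0 1) := by
  have hleft : dbl ⁻¹' s ∩ Icc 0 (1 / 2) = (2 * ·) ⁻¹' (s ∩ Icc 0 1) := by
    ext x
    simp only [mem_inter_iff, mem_preimage, mem_Icc, dbl]
    constructor
    · rintro ⟨hx, h0, h1⟩
      rw [if_pos h1] at hx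
      exact ⟨hx, by linarith, by linarith⟩
    · rintro ⟨hx, h0, h1⟩
      rw [if_pos (by linarith)]
      exact ⟨hx, by linarith, by linarith⟩
  have hright : dbl ⁻¹' s ∩ Ioc (1 / 2) 1 = (2 * ·) ⁻¹' ((· + -1) ⁻¹' (s ∩ Ioc 0 1)) := by
    ext x
    simp only [mem_inter_iff, mem_preimage, mem_Ioc, dbl, ← sub_eq_add_neg]
    constructor
    · rintro ⟨hx, h0, h1⟩
      rw [if_neg (by linarith)] at hx
      exact ⟨hx, by linarith, by linarith⟩
    · rintro ⟨hx, h0, h1⟩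
      rw [if_neg (by linarith)]
      exact ⟨hx, by linarith, by linarith⟩
  have hsplit :
      dbl ⁻¹' s ∩ Icc 0 1 = (dbl ⁻¹' s ∩ Icc 0 (1 / 2)) ∪ (dbl ⁻¹' s ∩ Ioc (1 / 2) 1) := by
    rw [← inter_union_distrib_left, Icc_union_Ioc_eq_Icc (by norm_num) (by norm_num)]
  have hdisj : Disjoint (dbl ⁻¹' s ∩ Icc 0 (1 / 2)) (dbl ⁻¹' s ∩ Ioc (1 / 2) 1) :=
    (disjoint_left.mpr fun x hx hx' => not_lt.mpr hx.2 hx'.1).mono inter_subset_right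
      inter_subset_right
  have hIoc : volume (s ∩ Ioc (0 : ℝ) 1) = volume (s ∩ Icc 0 1) :=
    measure_congr (ae_eq_set_inter (ae_eq_refl s) Ioc_ae_eq_Icc)
  rw [hsplit, measure_union hdisj ((measurable_dbl hs).inter measurableSet_Ioc), hleft, hright,
    Real.volume_preimage_mul_left two_ne_zero, Real.volume_preimage_mul_left two_ne_zero,
    measure_preimage_add_right, hIoc, ← add_mul,
    ← ENNReal.ofReal_add (by positivity) (by positivity)]
  norm_num

lemma measurePreserving_dbl :
    MeasurePreserving dbl (volume.restrict (Icc 0 1)) (volume.restrict (Icc 0 1)) := by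
  refine ⟨measurable_dbl, Measure.ext fun s hs => ?_⟩
  rw [Measure.map_apply measurable_dbl hs, Measure.restrict_apply (measurable_dbl hs),
    Measure.restrict_apply hs, volume_dbl_preimage_inter_Icc hs]

def halfStep (a b x : ℝ) : ℝ := if x ≤ 1 / 2 then a else b

lemma measurable_halfStep (a b : ℝ) : Measurable (halfStep a b) :=
  Measurable.ite measurableSet_Iic measurable_const measurable_const

lemma integrableOn_halfStep (a b : ℝ) : IntegrableOn (halfStep a b) (Icc 0 1) := by
  refine Measure.integrableOn_of_bounded (M := max |a| |b|) (by simp)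
    (measurable_halfStep a b).aestronglyMeasurable (Eventually.of_forall fun x => ?_)
  unfold halfStep
  split_ifs
  · exact le_max_left _ _
  · exact le_max_right _ _

lemma setIntegral_Icc_halfStep (a b : ℝ) : ∫ x in Icc 0 1, halfStep a b x = (a + b) / 2 := by
  have hint := integrableOn_halfStep a b
  have hdisj : Disjoint (Icc (0 : ℝ) (1 / 2)) (Ioc (1 / 2) 1) :=
    disjoint_left.mpr fun x hx hx' => not_lt.mpr hx.2 hx'.1
  have hleft : ∫ x in Icc 0 (1 / 2), halfStep a b x = ∫ _ in Icc (0 : ℝ) (1 / 2), a :=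
    setIntegral_congr_fun measurableSet_Icc fun x hx => if_pos hx.2
  have hright : ∫ x in Ioc (1 / 2) 1, halfStep a b x = ∫ _ in Ioc (1 / 2 : ℝ) 1, b :=
    setIntegral_congr_fun measurableSet_Ioc fun x hx => if_neg (not_le.mpr hx.1)
  rw [← Icc_union_Ioc_eq_Icc (by norm_num : (0 : ℝ) ≤ 1 / 2) (by norm_num : (1 / 2 : ℝ) ≤ 1)]
    at hint ⊢
  rw [setIntegral_union hdisj measurableSet_Ioc hint.left_of_union hint.right_of_union, hleft,
    hright, setIntegral_const, setIntegral_const, measureReal_def, measureReal_def,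
    Real.volume_Icc, Real.volume_Ioc, ENNReal.toReal_ofReal (by norm_num),
    ENNReal.toReal_ofReal (by norm_num), smul_eq_mul, smul_eq_mul]
  ring

lemma one_sub_g1_le {β y : ℝ} (hβ : 0 ≤ β) (hy : y ∈ Icc 0 1) :
    0 ≤ 1 - g1 β y ∧ 1 - g1 β y ≤ (β + 2 * (1 - y)) * (1 - y) := by
  obtain ⟨hy0, hy1⟩ := hy
  have hfactor : 1 - g1 β y = (β + (1 - y) * (1 + y - β)) * (1 - y) := by unfold g1; ring
  rw [hfactor]
  refine ⟨mul_nonneg ?_ (sub_nonneg.mpr hy1), mul_le_mul_of_nonneg_right ?_ (sub_nonneg.mpr hy1)⟩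
    <;> nlinarith

lemma one_sub_g2_le {β y : ℝ} (hβ : β ≤ 1) (hy : y ∈ Icc 0 1) :
    0 ≤ 1 - g2 β y ∧ 1 - g2 β y ≤ (2 - β) * (1 - y) := by
  obtain ⟨hy0, hy1⟩ := hy
  have hfactor : 1 - g2 β y = (2 - β - (1 - y) * (1 + y - β)) * (1 - y) := by unfold g2; ring
  rw [hfactor]
  refine ⟨mul_nonneg ?_ (sub_nonneg.mpr hy1), mul_le_mul_of_nonneg_right ?_ (sub_nonneg.mpr hy1)⟩
    <;> nlinarith

lemma Fsk_iterate_fst (β1 β2 : ℝ) (p : ℝ × ℝ) (n : ℕ) :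
    ((Fsk β1 β2)^[n] p).1 = dbl^[n] p.1 := by
  induction n with
  | zero => rfl
  | succ n ih =>
    rw [Function.iterate_succ_apply', Function.iterate_succ_apply', ← ih, Fsk]
    split_ifs <;> rfl

/-- The logarithm of the factor by which the fibre map over `x` contracts `1 - y` once
`1 - y ≤ ε`. -/
def logRate (β1 β2 ε : ℝ) : ℝ → ℝ := halfStep (Real.log (β1 + 2 * ε)) (Real.log (2 - β2))

lemma setIntegral_Icc_logRate_sub (β1 β2 ε c : ℝ) :
    ∫ x in Icc 0 1, (logRate β1 β2 ε x - c) =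
      (Real.log (β1 + 2 * ε) + Real.log (2 - β2)) / 2 - c := by
  unfold logRate
  rw [integral_sub (integrableOn_halfStep _ _) (integrable_const c), setIntegral_Icc_halfStep,
    setIntegral_const, measureReal_def, Real.volume_Icc]
  norm_num

section Fiber

variable {β1 β2 ε c : ℝ}

lemma exp_logRate (hβ1 : 0 ≤ β1) (hβ2 : β2 ≤ 1) (hε : 0 < ε) (x : ℝ) :
    Real.exp (logRate β1 β2 ε x) = halfStep (β1 + 2 * ε) (2 - β2) x := by
  unfold logRate halfStep
  split_ifs
  · exact Real.exp_log (by linarith)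
  · exact Real.exp_log (by linarith)

lemma one_sub_Fsk_snd_le (hβ1 : 0 ≤ β1) (hβ2 : β2 ≤ 1) {p : ℝ × ℝ} (hp : p.2 ∈ Icc 0 1)
    (hpε : 1 - p.2 ≤ ε) :
    0 ≤ 1 - (Fsk β1 β2 p).2 ∧
      1 - (Fsk β1 β2 p).2 ≤ halfStep (β1 + 2 * ε) (2 - β2) p.1 * (1 - p.2) := by
  unfold Fsk halfStep
  split_ifs
  · obtain ⟨h0, h1⟩ := one_sub_g1_le hβ1 hp
    exact ⟨h0, h1.trans (mul_le_mul_of_nonneg_right (by linarith) (sub_nonneg.mpr hp.2))⟩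
  · exact one_sub_g2_le hβ2 hp

lemma one_sub_Fsk_iterate_snd_le (hβ1 : 0 ≤ β1) (hβ2 : β2 ≤ 1) (hε0 : 0 < ε) (hε1 : ε ≤ 1)
    {x y : ℝ} (hy : y ∈ Icc (1 - ε) 1) (hS : ∀ n, birkhoffSum dbl (logRate β1 β2 ε) n x ≤ 0)
    (n : ℕ) :
    0 ≤ 1 - ((Fsk β1 β2)^[n] (x, y)).2 ∧
      1 - ((Fsk β1 β2)^[n] (x, y)).2 ≤ ε * Real.exp (birkhoffSum dbl (logRate β1 β2 ε) n x) := by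
  induction n with
  | zero =>
    simp only [Function.iterate_zero_apply, birkhoffSum_zero, Real.exp_zero, mul_one]
    constructor <;> linarith [hy.1, hy.2]
  | succ n ih =>
    set q := (Fsk β1 β2)^[n] (x, y)
    have hqε : 1 - q.2 ≤ ε :=
      ih.2.trans (mul_le_of_le_one_right hε0.le (Real.exp_le_one_iff.mpr (hS n)))
    have hq : q.2 ∈ Icc 0 1 := ⟨by linarith, by linarith [ih.1]⟩
    obtain ⟨h0, h1⟩ := one_sub_Fsk_snd_le hβ1 hβ2 hq hqε
    rw [Function.iterate_succ_apply']
    refine ⟨h0, h1.trans ?_⟩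
    rw [birkhoffSum_succ, Real.exp_add, ← Fsk_iterate_fst β1 β2 (x, y) n,
      exp_logRate hβ1 hβ2 hε0]
    calc halfStep (β1 + 2 * ε) (2 - β2) q.1 * (1 - q.2)
        ≤ halfStep (β1 + 2 * ε) (2 - β2) q.1 * (ε * Real.exp _) :=
          mul_le_mul_of_nonneg_left ih.2 (by rw [← exp_logRate hβ1 hβ2 hε0]; positivity)
      _ = _ := by ring

lemma tendsto_Fsk_iterate_snd (hβ1 : 0 ≤ β1) (hβ2 : β2 ≤ 1) (hε0 : 0 < ε) (hε1 : ε ≤ 1)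
    (hc : c < 0) {x y : ℝ} (hy : y ∈ Icc (1 - ε) 1)
    (hS : ∀ n, birkhoffSum dbl (fun t => logRate β1 β2 ε t - c) n x ≤ 0) :
    Tendsto (fun n => ((Fsk β1 β2)^[n] (x, y)).2) atTop (nhds 1) := by
  have hSc (n : ℕ) : birkhoffSum dbl (logRate β1 β2 ε) n x ≤ n * c := by
    linarith [birkhoffSum_sub_const dbl (logRate β1 β2 ε) c n x, hS n]
  have hbound := one_sub_Fsk_iterate_snd_le hβ1 hβ2 hε0 hε1 hy
    fun n => (hSc n).trans (mul_nonpos_of_nonneg_of_nonpos n.cast_nonneg hc.le)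
  have hgeom : Tendsto (fun n : ℕ => ε * Real.exp c ^ n) atTop (nhds 0) := by
    simpa using (tendsto_pow_atTop_nhds_zero_of_lt_one (Real.exp_nonneg c)
      (Real.exp_lt_one_iff.mpr hc)).const_mul ε
  have hdist : Tendsto (fun n => 1 - ((Fsk β1 β2)^[n] (x, y)).2) atTop (nhds 0) := by
    refine squeeze_zero (fun n => (hbound n).1) (fun n => (hbound n).2.trans ?_) hgeom
    rw [← Real.exp_nat_mul]
    gcongr
    exact hSc n
  simpa using hdist.const_sub 1

lemma prod_subset_basin (hβ1 : 0 ≤ β1) (hβ2 : β2 ≤ 1) (hε0 : 0 < ε) (hε1 : ε ≤ 1) (hc : c < 0) :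
    ({x | ∀ n, birkhoffSum dbl (fun t => logRate β1 β2 ε t - c) n x ≤ 0} ∩ Icc 0 1) ×ˢ
      Icc (1 - ε) 1 ⊆ basin β1 β2 1 := by
  rintro ⟨x, y⟩ ⟨⟨hS, hx⟩, hy⟩
  exact ⟨⟨hx, by linarith [hy.1], hy.2⟩, tendsto_Fsk_iterate_snd hβ1 hβ2 hε0 hε1 hc hy hS⟩

end Fiber

lemma exists_rate_mul_lt_one {β1 β2 : ℝ} (hβ1 : 0 ≤ β1) (hβ2 : β2 < 1)
    (hcond : β1 * (2 - β2) < 1) :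
    ∃ ε : ℝ, 0 < ε ∧ ε ≤ 1 ∧ (β1 + 2 * ε) * (2 - β2) < 1 := by
  have hb : 0 < 2 - β2 := by linarith
  refine ⟨(1 - β1 * (2 - β2)) / (4 * (2 - β2)), div_pos (by linarith) (by linarith), ?_, ?_⟩
  · rw [div_le_one (by linarith)]
    nlinarith [mul_nonneg hβ1 hb.le]
  · have : (β1 + 2 * ((1 - β1 * (2 - β2)) / (4 * (2 - β2)))) * (2 - β2)
        = (1 + β1 * (2 - β2)) / 2 := by field_simp; ring
    linarith

theorem stmt7 (β1 β2 : ℝ) (hβ1 : β1 ∈ Set.Ioo (0:ℝ) 1) (hβ2 : β2 ∈ Set.Ioo (0:ℝ) 1)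
    (hcond : β1 * (2 - β2) < 1) :
    0 < volume (basin β1 β2 1) := by
  obtain ⟨ε, hε0, hε1, hrate⟩ := exists_rate_mul_lt_one hβ1.1.le hβ2.2 hcond
  have hL : Real.log (β1 + 2 * ε) + Real.log (2 - β2) < 0 := by
    rw [← Real.log_mul (by linarith [hβ1.1]) (by linarith [hβ2.2])]
    exact Real.log_neg (mul_pos (by linarith [hβ1.1]) (by linarith [hβ2.2])) hrate
  set c := (Real.log (β1 + 2 * ε) + Real.log (2 - β2)) / 4 with hc
  set P := {x | ∀ n, birkhoffSum dbl (fun t => logRate β1 β2 ε t - c) n x ≤ 0}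
  have hP : 0 < volume.restrict (Icc 0 1) P :=
    measure_forall_birkhoffSum_nonpos_pos measurePreserving_dbl
      ((integrableOn_halfStep _ _).sub (integrable_const c))
      (by rw [setIntegral_Icc_logRate_sub]; linarith)
  calc 0 < volume.restrict (Icc 0 1) P * ENNReal.ofReal ε :=
        ENNReal.mul_pos hP.ne' (ENNReal.ofReal_pos.mpr hε0).ne'
    _ = volume ((P ∩ Icc 0 1) ×ˢ Icc (1 - ε) 1) := by
        rw [Measure.volume_eq_prod, Measure.prod_prod, Measure.restrict_apply' measurableSet_Icc,
          Real.volume_Icc, sub_sub_cancel]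
    _ ≤ volume (basin β1 β2 1) :=
        measure_mono (prod_subset_basin hβ1.1.le hβ2.2.le hε0 hε1 (by linarith))
end
end
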